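/- arXiv:2110.14372 — 2 statements merged into one kernel-verified Lean document; each statement's English description precedes it below -/
import Mathlib

section
/- For every p ≥ 1 there exists a constant C = C(p) > 0 such that the following holds. Let Ω ⊆ ℝ^d be a Borel set and let μ, λ be finite positive Borel measures on Ω with finite p-th moments and λ(Ω) > 0. Then for every countable Borel partition (Ω_k)_k of Ω with λ(Ω_k) > 0 for every k, and every ε ∈ (0,1): W_{Ω,p}^p( μ, (μ(Ω)/λ(Ω))·λ ) ≤ (1+ε) · Σ_k W_{Ω_k,p}^p( μ, (μ(Ω_k)/λ(Ω_k))·λ ) + (C/ε^{p−1}) · W_{Ω,p}^p( Σ_k (μ(Ω_k)/λ(Ω_k))·χ_{Ω_k}·λ, (μ(Ω)/λ(Ω))·λ ). -/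
/-!
Glue a near-optimal coupling of `μ` with the piecewise rescaled measure
`ν = ∑ₖ (μ(Ωₖ)/λ(Ωₖ)) λ|Ωₖ` (itself glued from near-optimal couplings on the cells `Ωₖ`)
with a near-optimal coupling of `ν` with `(μ(Ω)/λ(Ω)) λ`. Minkowski's inequality makes
`W_p = wCost ^ p⁻¹` satisfy the triangle inequality, and
`(a + b) ^ p ≤ (1 + s) ^ (p - 1) a ^ p + (1 + s⁻¹) ^ (p - 1) b ^ p` with `s = ε / (2 p)`
turns `(W_p(μ, ν) + W_p(ν, ·)) ^ p` into the two terms of the bound, with `C = (3 p) ^ (p - 1)`.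
-/

open MeasureTheory ProbabilityTheory Filter
open scoped ENNReal NNReal

noncomputable section

/-- The Wasserstein cost of order `p` (i.e. the `p`-th power of the `p`-Wasserstein
distance): the infimum over couplings `π` of `μ` and `ν` of `∫ edist(x,y)^p dπ`. -/
def wCost {E : Type*} [MeasurableSpace E] [PseudoEMetricSpace E]
    (p : ℝ) (μ ν : Measure E) : ℝ≥0∞ :=
  ⨅ π ∈ {π : Measure (E × E) | π.map Prod.fst = μ ∧ π.map Prod.snd = ν},
    ∫⁻ z, edist z.1 z.2 ^ p ∂π

/-- The boundary Wasserstein cost of order `p` on a set `A`: the infimum of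
`∫ edist(x,y)^p dπ` over positive measures `π` concentrated on `cl A × cl A`
whose marginals restricted to `A` coincide with `μ` and `ν` restricted to `A`. -/
def bCost {E : Type*} [MeasurableSpace E] [PseudoEMetricSpace E]
    (p : ℝ) (A : Set E) (μ ν : Measure E) : ℝ≥0∞ :=
  ⨅ π ∈ {π : Measure (E × E) |
      π ((closure A ×ˢ closure A)ᶜ) = 0 ∧
      (π.map Prod.fst).restrict A = μ.restrict A ∧
      (π.map Prod.snd).restrict A = ν.restrict A},
    ∫⁻ z, edist z.1 z.2 ^ p ∂π

/-- The empirical measure `(1/n) ∑_{i<n} δ_{x i}`. -/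
def empMeasure {E : Type*} [MeasurableSpace E] (n : ℕ) (x : ℕ → E) : Measure E :=
  (n : ℝ≥0∞)⁻¹ • ∑ i ∈ Finset.range n, Measure.dirac (x i)

/-- A set `Ω ⊆ ℝ^d` has Lipschitz boundary: near every boundary point, for a suitable
unit direction `e`, `Ω` coincides with the open region strictly above the graph of a
Lipschitz function defined on the hyperplane `e^⊥`. -/
def HasLipschitzBoundary {d : ℕ} (Ω : Set (EuclideanSpace ℝ (Fin d))) : Prop :=
  ∀ x ∈ frontier Ω, ∃ e : EuclideanSpace ℝ (Fin d), ‖e‖ = 1 ∧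
    ∃ r : ℝ, 0 < r ∧ ∃ L : ℝ≥0, ∃ φ : EuclideanSpace ℝ (Fin d) → ℝ,
      LipschitzWith L φ ∧
      Ω ∩ Metric.ball x r =
        {y ∈ Metric.ball x r | φ (y - (inner ℝ y e : ℝ) • e) < (inner ℝ y e : ℝ)}

/-- `X` is an i.i.d. sequence of random variables with common law `μ` under `P`. -/
def IsIIDSeq {Ωs E : Type*} [MeasurableSpace Ωs] [MeasurableSpace E]
    (P : Measure Ωs) (X : ℕ → Ωs → E) (μ : Measure E) : Prop :=
  (∀ i, Measurable (X i)) ∧ (∀ i, P.map (X i) = μ) ∧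
    iIndepFun X P

/-- `X` and `Y` are jointly i.i.d. sequences with common law `μ` under `P`. -/
def IsIIDPair {Ωs E : Type*} [MeasurableSpace Ωs] [MeasurableSpace E]
    (P : Measure Ωs) (X Y : ℕ → Ωs → E) (μ : Measure E) : Prop :=
  (∀ i, Measurable (X i)) ∧ (∀ i, Measurable (Y i)) ∧
  (∀ i, P.map (X i) = μ) ∧ (∀ i, P.map (Y i) = μ) ∧
    iIndepFun (Sum.elim X Y) P

/-- `ρ` is a Hölder continuous probability density on `Ω`, uniformly strictly positive
and bounded from above. -/
def IsGoodDensity {d : ℕ} (Ω : Set (EuclideanSpace ℝ (Fin d)))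
    (ρ : EuclideanSpace ℝ (Fin d) → ℝ) : Prop :=
  Measurable ρ ∧
  (∃ α ∈ Set.Ioc (0:ℝ) 1, ∃ C : ℝ, ∀ x ∈ Ω, ∀ y ∈ Ω, |ρ x - ρ y| ≤ C * dist x y ^ α) ∧
  (∃ a > (0:ℝ), ∀ x ∈ Ω, a ≤ ρ x) ∧ (∃ b : ℝ, ∀ x ∈ Ω, ρ x ≤ b) ∧
  ∫ x in Ω, ρ x = 1

end

theorem Real.one_add_div_two_mul_rpow_le {p ε : ℝ} (hp : 1 ≤ p) (hε : 0 < ε) (hε₁ : ε ≤ 1) :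
    (1 + ε / (2 * p)) ^ (p - 1) ≤ 1 + ε := by
  have hp₀ : 0 < p := by linarith
  calc (1 + ε / (2 * p)) ^ (p - 1) ≤ Real.exp (ε / (2 * p)) ^ (p - 1) := by
        gcongr
        linarith [Real.add_one_le_exp (ε / (2 * p))]
    _ = Real.exp (ε / (2 * p) * (p - 1)) := by rw [← Real.exp_mul]
    _ ≤ Real.exp (ε / 2) := by
        gcongr
        rw [div_mul_eq_mul_div, div_le_div_iff₀ (by positivity) (by norm_num)]
        nlinarith
    _ ≤ 1 / (1 - ε / 2) := Real.exp_bound_div_one_sub_of_interval (by positivity) (by linarith)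
    _ ≤ 1 + ε := by
        rw [div_le_iff₀ (by linarith)]
        nlinarith

theorem Real.one_add_inv_div_two_mul_rpow_le {p ε : ℝ} (hp : 1 ≤ p) (hε : 0 < ε)
    (hε₁ : ε ≤ 1) : (1 + (ε / (2 * p))⁻¹) ^ (p - 1) ≤ (3 * p) ^ (p - 1) / ε ^ (p - 1) := by
  have hp₀ : 0 < p := by linarith
  rw [← Real.div_rpow (by positivity) hε.le]
  gcongr
  rw [inv_div, le_div_iff₀ hε, add_mul, one_mul, div_mul_cancel₀ _ hε.ne']
  linarith

namespace ENNReal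

theorem add_rpow_le_one_add_rpow_mul_add {p : ℝ} (hp : 1 ≤ p) {s : ℝ≥0∞} (hs₀ : s ≠ 0)
    (hs : s ≠ ∞) (a b : ℝ≥0∞) :
    (a + b) ^ p ≤ (1 + s) ^ (p - 1) * a ^ p + (1 + s⁻¹) ^ (p - 1) * b ^ p := by
  have hweight : ∀ x : ℝ≥0∞, x ≠ ∞ → ∀ c : ℝ≥0∞,
      (1 + x)⁻¹ * ((1 + x) * c) ^ p = (1 + x) ^ (p - 1) * c ^ p := fun x hx c => by
    rw [mul_rpow_of_nonneg _ _ (by linarith), rpow_sub _ _ (by simp) (by simp [hx]), rpow_one,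
      div_eq_mul_inv]
    ring
  have hsum : (1 + s)⁻¹ + (1 + s⁻¹)⁻¹ = 1 := by
    lift s to ℝ≥0 using hs
    have hs₀' : s ≠ 0 := by exact_mod_cast hs₀
    rw [← coe_inv hs₀', ← coe_one, ← coe_add, ← coe_add, ← coe_inv (by positivity),
      ← coe_inv (by positivity), ← coe_add, coe_inj]
    field_simp
    ring
  have key := rpow_arith_mean_le_arith_mean2_rpow _ _ ((1 + s) * a) ((1 + s⁻¹) * b) hsum hp
  rwa [ENNReal.inv_mul_cancel_left (by simp) (by simp [hs]),
    ENNReal.inv_mul_cancel_left (by simp) (by simp [hs₀]), hweight s hs,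
    hweight s⁻¹ (by simp [hs₀])] at key

theorem add_rpow_le_ofReal_one_add_mul_add {p ε : ℝ} (hp : 1 ≤ p) (hε : 0 < ε) (hε₁ : ε ≤ 1)
    (a b : ℝ≥0∞) :
    (a + b) ^ p ≤ ENNReal.ofReal (1 + ε) * a ^ p +
      ENNReal.ofReal ((3 * p) ^ (p - 1) / ε ^ (p - 1)) * b ^ p := by
  have hs : 0 < ε / (2 * p) := by positivity
  refine (add_rpow_le_one_add_rpow_mul_add hp (ofReal_pos.2 hs).ne' ofReal_ne_top a b).trans ?_
  have hp₁ : 0 ≤ p - 1 := by linarith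
  gcongr
  · rw [← ofReal_one, ← ofReal_add zero_le_one hs.le, ofReal_rpow_of_nonneg (by positivity) hp₁]
    exact ofReal_le_ofReal (Real.one_add_div_two_mul_rpow_le hp hε hε₁)
  · rw [← ofReal_inv_of_pos hs, ← ofReal_one, ← ofReal_add zero_le_one (by positivity),
      ofReal_rpow_of_nonneg (by positivity) hp₁]
    exact ofReal_le_ofReal (Real.one_add_inv_div_two_mul_rpow_le hp hε hε₁)

end ENNReal

theorem MeasureTheory.Measure.exists_map_prodMap_eq_of_fst_eq {α β γ : Type*}
    [MeasurableSpace α] [MeasurableSpace β] [MeasurableSpace γ]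
    [StandardBorelSpace β] [Nonempty β] [StandardBorelSpace γ] [Nonempty γ]
    (ρ₁ : Measure (α × β)) (ρ₂ : Measure (α × γ)) [IsFiniteMeasure ρ₁] [IsFiniteMeasure ρ₂]
    (h : ρ₁.fst = ρ₂.fst) :
    ∃ ν : Measure (α × β × γ),
      ν.map (Prod.map id Prod.fst) = ρ₁ ∧ ν.map (Prod.map id Prod.snd) = ρ₂ := by
  refine ⟨ρ₂.fst ⊗ₘ (ρ₁.condKernel ×ₖ ρ₂.condKernel), ?_, ?_⟩
  · rw [← Measure.compProd_map measurable_fst, ← Kernel.fst_eq, Kernel.fst_prod, ← h,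
      ρ₁.disintegrate]
  · rw [← Measure.compProd_map measurable_snd, ← Kernel.snd_eq, Kernel.snd_prod,
      ρ₂.disintegrate]

section Coupling

variable {E : Type*} [PseudoEMetricSpace E] [MeasurableSpace E] {p : ℝ}

theorem exists_coupling_lintegral_edist_rpow_inv_le_add [OpensMeasurableSpace E]
    [SecondCountableTopology E] [StandardBorelSpace E] [Nonempty E] (hp : 1 ≤ p)
    (π₁ π₂ : Measure (E × E)) [IsFiniteMeasure π₁] [IsFiniteMeasure π₂] (h : π₁.snd = π₂.fst) :
    ∃ π : Measure (E × E), π.fst = π₁.fst ∧ π.snd = π₂.snd ∧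
      (∫⁻ z, edist z.1 z.2 ^ p ∂π) ^ p⁻¹ ≤
        (∫⁻ z, edist z.1 z.2 ^ p ∂π₁) ^ p⁻¹ + (∫⁻ z, edist z.1 z.2 ^ p ∂π₂) ^ p⁻¹ := by
  obtain ⟨ν, hν₁, hν₂⟩ := (π₁.map Prod.swap).exists_map_prodMap_eq_of_fst_eq π₂
    (by rw [Measure.fst_map_swap, h])
  have hcost : Measurable fun z : E × E => edist z.1 z.2 ^ p := by fun_prop
  have hcost₁ : ∫⁻ x, edist x.2.1 x.1 ^ p ∂ν = ∫⁻ z, edist z.1 z.2 ^ p ∂π₁ := by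
    have h := lintegral_map (μ := π₁) (f := fun z : E × E => edist z.2 z.1 ^ p)
      (by fun_prop) measurable_swap
    rwa [← hν₁, lintegral_map (by fun_prop) (by fun_prop)] at h
  have hcost₂ : ∫⁻ x, edist x.1 x.2.2 ^ p ∂ν = ∫⁻ z, edist z.1 z.2 ^ p ∂π₂ := by
    rw [← hν₂, lintegral_map hcost (by fun_prop)]
    rfl
  refine ⟨ν.map (fun x => x.2), ?_, ?_, ?_⟩
  · rw [← Measure.snd_map_swap (ρ := π₁), ← hν₁, Measure.fst, Measure.snd,
      Measure.map_map measurable_fst measurable_snd, Measure.map_map measurable_snd (by fun_prop)]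
    rfl
  · rw [Measure.snd, Measure.map_map measurable_snd measurable_snd, ← hν₂,
      Measure.snd, Measure.map_map measurable_snd (by fun_prop)]
    rfl
  calc (∫⁻ z, edist z.1 z.2 ^ p ∂ν.map (fun x => x.2)) ^ p⁻¹
      = (∫⁻ x, edist x.2.1 x.2.2 ^ p ∂ν) ^ p⁻¹ := by
        rw [lintegral_map hcost measurable_snd]
    _ ≤ (∫⁻ x, (edist x.2.1 x.1 + edist x.1 x.2.2) ^ p ∂ν) ^ p⁻¹ := by
        gcongr with x
        exact edist_triangle _ _ _
    _ ≤ (∫⁻ x, edist x.2.1 x.1 ^ p ∂ν) ^ p⁻¹ + (∫⁻ x, edist x.1 x.2.2 ^ p ∂ν) ^ p⁻¹ := by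
        simpa only [one_div, Pi.add_apply] using ENNReal.lintegral_Lp_add_le
          (μ := ν) (f := fun x => edist x.2.1 x.1) (g := fun x => edist x.1 x.2.2) (by fun_prop)
          (by fun_prop) hp
    _ = _ := by rw [hcost₁, hcost₂]

namespace wCost

theorem le_lintegral {μ ν : Measure E} {π : Measure (E × E)} (h₁ : π.fst = μ)
    (h₂ : π.snd = ν) : wCost p μ ν ≤ ∫⁻ z, edist z.1 z.2 ^ p ∂π :=
  iInf₂_le π ⟨h₁, h₂⟩

theorem exists_lintegral_lt {μ ν : Measure E} {c : ℝ≥0∞} (h : wCost p μ ν < c) :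
    ∃ π : Measure (E × E), π.fst = μ ∧ π.snd = ν ∧ ∫⁻ z, edist z.1 z.2 ^ p ∂π < c := by
  obtain ⟨π, ⟨h₁, h₂⟩, hπ⟩ := by simpa only [wCost, iInf_lt_iff, exists_prop] using h
  exact ⟨π, h₁, h₂, hπ⟩

theorem rpow_eq_iInf {q : ℝ} (hq : 0 < q) (μ ν : Measure E) :
    wCost p μ ν ^ q = ⨅ π ∈ {π : Measure (E × E) | π.fst = μ ∧ π.snd = ν},
      (∫⁻ z, edist z.1 z.2 ^ p ∂π) ^ q := by
  simp only [wCost, ← ENNReal.orderIsoRpow_apply _ hq, OrderIso.map_iInf]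
  rfl

theorem rpow_inv_le_add [OpensMeasurableSpace E] [SecondCountableTopology E]
    [StandardBorelSpace E] [Nonempty E] (hp : 1 ≤ p) (μ ρ ν : Measure E) [IsFiniteMeasure ρ] :
    wCost p μ ν ^ p⁻¹ ≤ wCost p μ ρ ^ p⁻¹ + wCost p ρ ν ^ p⁻¹ := by
  have hp' : 0 < p⁻¹ := by positivity
  rw [rpow_eq_iInf hp' μ ρ, rpow_eq_iInf hp' ρ ν]
  simp only [ENNReal.iInf_add]
  simp only [ENNReal.add_iInf]
  refine le_iInf₂ fun π₁ ⟨hπ₁, hπ₁'⟩ => le_iInf₂ fun π₂ ⟨hπ₂, hπ₂'⟩ => ?_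
  have : IsFiniteMeasure π₁ :=
    (Measure.isFiniteMeasure_map_iff measurable_snd.aemeasurable).1
      (by rw [← Measure.snd, hπ₁']; infer_instance)
  have : IsFiniteMeasure π₂ :=
    (Measure.isFiniteMeasure_map_iff measurable_fst.aemeasurable).1
      (by rw [← Measure.fst, hπ₂]; infer_instance)
  obtain ⟨π, hπ, hπ', hcost⟩ :=
    exists_coupling_lintegral_edist_rpow_inv_le_add hp π₁ π₂ (hπ₁'.trans hπ₂.symm)
  calc wCost p μ ν ^ p⁻¹ ≤ (∫⁻ z, edist z.1 z.2 ^ p ∂π) ^ p⁻¹ := by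
        gcongr
        exact le_lintegral (hπ.trans hπ₁) (hπ'.trans hπ₂')
    _ ≤ _ := hcost

theorem sum_le_tsum {ι : Type*} [Countable ι] (μ ν : ι → Measure E) :
    wCost p (Measure.sum μ) (Measure.sum ν) ≤ ∑' i, wCost p (μ i) (ν i) := by
  refine ENNReal.le_of_forall_pos_le_add fun δ hδ hfin => ?_
  obtain ⟨δ', hδ'₀, hδ'⟩ := ENNReal.exists_pos_sum_of_countable (ENNReal.coe_pos.2 hδ).ne' ι
  have hlt : ∀ i, wCost p (μ i) (ν i) < wCost p (μ i) (ν i) + δ' i := fun i =>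
    ENNReal.lt_add_right (ne_top_of_le_ne_top hfin.ne (ENNReal.le_tsum i))
      (ENNReal.coe_pos.2 (hδ'₀ i)).ne'
  choose π hπ₁ hπ₂ hπ using fun i => exists_lintegral_lt (hlt i)
  calc wCost p (Measure.sum μ) (Measure.sum ν)
      ≤ ∫⁻ z, edist z.1 z.2 ^ p ∂Measure.sum π := by
        refine le_lintegral ?_ ?_
        · rw [Measure.fst, Measure.map_sum measurable_fst.aemeasurable]
          exact congrArg Measure.sum (funext hπ₁)
        · rw [Measure.snd, Measure.map_sum measurable_snd.aemeasurable]
          exact congrArg Measure.sum (funext hπ₂)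
    _ = ∑' i, ∫⁻ z, edist z.1 z.2 ^ p ∂π i := lintegral_sum_measure _ _
    _ ≤ ∑' i, (wCost p (μ i) (ν i) + δ' i) := ENNReal.tsum_le_tsum fun i => (hπ i).le
    _ ≤ ∑' i, wCost p (μ i) (ν i) + δ := by
        rw [ENNReal.tsum_add]
        gcongr

end wCost

end Coupling

theorem MeasureTheory.Measure.sum_div_smul_restrict_apply_univ {α ι : Type*}
    [MeasurableSpace α] [Countable ι] (μ ν : Measure α) {s : ι → Set α}
    (hs : ∀ i, MeasurableSet (s i)) (hd : Pairwise (Function.onFun Disjoint s))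
    (h₀ : ∀ i, ν (s i) ≠ 0) (h : ∀ i, ν (s i) ≠ ∞) :
    Measure.sum (fun i => ((μ (s i) / ν (s i)) • ν).restrict (s i)) Set.univ = μ (⋃ i, s i) := by
  rw [Measure.sum_apply _ MeasurableSet.univ, measure_iUnion hd hs]
  congr with i
  rw [Measure.restrict_apply_univ, Measure.smul_apply, smul_eq_mul,
    ENNReal.div_mul_cancel (h₀ i) (h i)]

/-- Equation (2.4): geometric subadditivity of the Wasserstein cost with respect to a
countable Borel partition of `Ω`, with constant `C = C(p)`. -/
theorem wasserstein_geometric_subadditivity (p : ℝ) (hp : 1 ≤ p) :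
    ∃ C > (0:ℝ), ∀ (d : ℕ) (Ω : Set (EuclideanSpace ℝ (Fin d))), MeasurableSet Ω →
      ∀ (μ lam : Measure (EuclideanSpace ℝ (Fin d))),
        IsFiniteMeasure μ → IsFiniteMeasure lam →
        μ Ωᶜ = 0 → lam Ωᶜ = 0 →
        (∫⁻ x, edist x 0 ^ p ∂μ) ≠ ⊤ → (∫⁻ x, edist x 0 ^ p ∂lam) ≠ ⊤ →
        0 < lam Ω →
        ∀ Ωs : ℕ → Set (EuclideanSpace ℝ (Fin d)),
          (∀ k, MeasurableSet (Ωs k)) →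
          Pairwise (Function.onFun Disjoint Ωs) →
          (⋃ k, Ωs k) = Ω →
          (∀ k, 0 < lam (Ωs k)) →
          ∀ ε : ℝ, 0 < ε → ε < 1 →
            wCost p (μ.restrict Ω) (((μ Ω / lam Ω) • lam).restrict Ω) ≤
              ENNReal.ofReal (1 + ε) *
                (∑' k, wCost p (μ.restrict (Ωs k))
                  (((μ (Ωs k) / lam (Ωs k)) • lam).restrict (Ωs k))) +
              ENNReal.ofReal (C / ε ^ (p - 1)) *
                wCost p
                  ((MeasureTheory.Measure.sum
                    (fun k => (μ (Ωs k) / lam (Ωs k)) • lam.restrict (Ωs k))).restrict Ω)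
                  (((μ Ω / lam Ω) • lam).restrict Ω) := by
  refine ⟨(3 * p) ^ (p - 1), by positivity, ?_⟩
  intro d Ω hΩ μ lam _ _ _ _ _ _ _ Ωs hΩs hdisj hunion hpos ε hε hε₁
  have hν : (Measure.sum fun k => (μ (Ωs k) / lam (Ωs k)) • lam.restrict (Ωs k)).restrict Ω =
      Measure.sum fun k => ((μ (Ωs k) / lam (Ωs k)) • lam).restrict (Ωs k) := by
    rw [Measure.restrict_sum _ hΩ]
    congr with k : 1
    rw [Measure.restrict_smul, Measure.restrict_smul, Measure.restrict_restrict hΩ,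
      Set.inter_eq_right.2 (hunion ▸ Set.subset_iUnion Ωs k)]
  have hμ : μ.restrict Ω = Measure.sum fun k => μ.restrict (Ωs k) := by
    rw [← hunion, Measure.restrict_iUnion hdisj hΩs]
  rw [hν]
  set ν := Measure.sum fun k => ((μ (Ωs k) / lam (Ωs k)) • lam).restrict (Ωs k)
  have : IsFiniteMeasure ν := ⟨by
    rw [Measure.sum_div_smul_restrict_apply_univ μ lam hΩs hdisj (fun k => (hpos k).ne')
      (fun k => measure_ne_top lam _)]
    exact measure_lt_top μ _⟩
  set T := ((μ Ω / lam Ω) • lam).restrict Ω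
  have hp₀ : 0 < p := by linarith
  calc wCost p (μ.restrict Ω) T ≤ (wCost p (μ.restrict Ω) ν ^ p⁻¹ + wCost p ν T ^ p⁻¹) ^ p :=
        (ENNReal.rpow_inv_le_iff hp₀).1 (wCost.rpow_inv_le_add hp _ _ _)
    _ ≤ ENNReal.ofReal (1 + ε) * (wCost p (μ.restrict Ω) ν ^ p⁻¹) ^ p +
          ENNReal.ofReal ((3 * p) ^ (p - 1) / ε ^ (p - 1)) * (wCost p ν T ^ p⁻¹) ^ p :=
        ENNReal.add_rpow_le_ofReal_one_add_mul_add hp hε hε₁.le _ _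
    _ ≤ _ := by
        rw [ENNReal.rpow_inv_rpow hp₀.ne', ENNReal.rpow_inv_rpow hp₀.ne', hμ]
        gcongr
        exact wCost.sum_le_tsum _ _
end

section
/- Let Ω ⊆ ℝ² be a bounded set. There exists a constant C > 0 depending only on Ω such that for every n ≥ 1 and every family of points x_1, …, x_n ∈ Ω, one has min_{τ ∈ S_n} Σ_{i=1}^n |x_{τ(i)} − x_{τ(i+1)}|² ≤ C, where S_n is the symmetric group on {1,…,n} and one uses the convention τ(n+1) = τ(1). -/
/-!
Points in a square of side `s` are ordered along the first levels of a Hilbert curve. Split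
the square into four quadrants traversed in Hilbert order, each entered at a corner and left
at the adjacent corner, which is the entrance of the next one. A path through the points of a
square is charged twice the squared length of its first and last edges, measured to the entrance
and exit corners; since `|x - z|² ≤ 2 |x - y|² + 2 |y - z|²`, the paths through the four
quadrants then glue at their common corners at no extra cost. Their costs are bounded by
`48 (s/2)² = 12 s²` by induction, so the glued path costs at most `48 s²`. If some quadrant is
empty, three gluings that detour through a corner cost `2 · 2 s²` each, which is absorbed by
that quadrant's share `12 s²`. Since finitely many points are separated after finitely many
halvings, the induction is on the depth of subdivision. Closing the path adds one edge of
squared length at most `2 s²`, and a bounded planar set lies in a square.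
-/

open scoped RealInnerProductSpace

theorem List.getLastD_append_cons {α : Type*} (p q : α) (xs ys : List α) :
    (xs ++ q :: ys).getLastD p = ys.getLastD q := by
  induction xs generalizing p with
  | nil => exact List.getLastD_cons
  | cons x xs ih => simpa only [List.cons_append, List.getLastD_cons] using ih x

theorem List.Perm.exists_eq_ofFn_comp {α : Type*} {n : ℕ} {x : Fin n → α} {l : List α}
    (h : l.Perm (List.ofFn x)) : ∃ σ : Equiv.Perm (Fin n), l = List.ofFn (x ∘ σ) := by
  obtain ⟨m, hm, hml⟩ : Relation.Comp List.Perm (List.Forall₂ fun i p => x i = p)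
      (List.finRange n) l := by
    rw [← List.forall₂_comp_perm_eq_perm_comp_forall₂]
    refine ⟨List.ofFn x, ?_, h.symm⟩
    rw [List.ofFn_eq_map, List.forall₂_map_right_iff]
    exact List.forall₂_same.2 fun _ _ => rfl
  obtain ⟨hlen, hget⟩ := List.forall₂_iff_get.1 hml
  have hn : m.length = n := by simpa using hm.length_eq.symm
  let e := (hm.nodup_iff.1 (List.nodup_finRange n)).getEquivOfForallMemList m
    fun i => hm.mem_iff.1 (List.mem_finRange i)
  refine ⟨(finCongr hn.symm).trans e,
    List.ext_get (by simp [← hlen, hn]) fun i h₁ h₂ => ?_⟩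
  simpa [e] using (hget i (hlen ▸ h₁) h₁).symm

theorem List.exists_perm_append_of_forall_mem_union {α : Type*} {l : List α} {S T : Set α}
    (h : ∀ p ∈ l, p ∈ S ∪ T) :
    ∃ l₁ l₂, l.Perm (l₁ ++ l₂) ∧ (∀ p ∈ l₁, p ∈ S) ∧ ∀ p ∈ l₂, p ∈ T := by
  classical
  refine ⟨l.filter (fun p => p ∈ S), l.filter (fun p => !decide (p ∈ S)),
    (List.filter_append_perm _ l).symm, fun p hp => ?_, fun p hp => ?_⟩
  · simpa using (List.mem_filter.1 hp).2
  · obtain ⟨hpl, hpS⟩ := List.mem_filter.1 hp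
    exact (h p hpl).resolve_left (by simpa using hpS)

theorem List.exists_perm_append₄ {α : Type*} {l : List α} {S₁ S₂ S₃ S₄ : Set α}
    (h : ∀ p ∈ l, p ∈ S₁ ∪ S₂ ∪ S₃ ∪ S₄) :
    ∃ l₁ l₂ l₃ l₄, l.Perm (l₁ ++ l₂ ++ l₃ ++ l₄) ∧ (∀ p ∈ l₁, p ∈ S₁) ∧
      (∀ p ∈ l₂, p ∈ S₂) ∧ (∀ p ∈ l₃, p ∈ S₃) ∧ ∀ p ∈ l₄, p ∈ S₄ := by
  obtain ⟨m₃, l₄, h₄, hm₃, hl₄⟩ := exists_perm_append_of_forall_mem_union h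
  obtain ⟨m₂, l₃, h₃, hm₂, hl₃⟩ := exists_perm_append_of_forall_mem_union hm₃
  obtain ⟨l₁, l₂, h₂, hl₁, hl₂⟩ := exists_perm_append_of_forall_mem_union hm₂
  exact ⟨l₁, l₂, l₃, l₄, h₄.trans ((h₃.trans (h₂.append_right l₃)).append_right l₄),
    hl₁, hl₂, hl₃, hl₄⟩

theorem List.exists_le_two_pow_mul_dist {α : Type*} [MetricSpace α] (l : List α) (c : ℝ) :
    ∃ k : ℕ, ∀ p ∈ l, ∀ q ∈ l, p ≠ q → c ≤ 2 ^ k * dist p q := by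
  rcases Set.subsingleton_or_nontrivial {p | p ∈ l} with hs | hs
  · exact ⟨0, fun p hp q hq hne => absurd (hs hp hq) hne⟩
  have hpos := l.finite_toSet.infsep_pos_iff_nontrivial.2 hs
  obtain ⟨k, hk⟩ := pow_unbounded_of_one_lt (c / Set.infsep {p | p ∈ l}) one_lt_two
  refine ⟨k, fun p hp q hq hne => ?_⟩
  rw [div_lt_iff₀ hpos] at hk
  nlinarith [Set.infsep_le_dist_of_mem (s := {p | p ∈ l}) hp hq hne,
    pow_pos (two_pos (α := ℝ)) k]

namespace QuadraticTSP

section Cost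

variable {α : Type*} [PseudoMetricSpace α]

theorem dist_sq_le_two_mul_add (x y z : α) :
    dist x z ^ 2 ≤ 2 * dist x y ^ 2 + 2 * dist y z ^ 2 := by
  nlinarith [dist_triangle x y z, dist_nonneg (x := x) (y := z),
    sq_nonneg (dist x y - dist y z)]

def pathCost : α → List α → ℝ
  | _, [] => 0
  | p, q :: l => dist p q ^ 2 + pathCost q l

def anchoredCost (a : α) : List α → α → ℝ
  | [], _ => 0
  | p :: l, b => 2 * dist a p ^ 2 + pathCost p l + 2 * dist (l.getLastD p) b ^ 2

@[simp] theorem anchoredCost_nil (a b : α) : anchoredCost a [] b = 0 := rfl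

theorem pathCost_append (p : α) (xs ys : List α) :
    pathCost p (xs ++ ys) = pathCost p xs + pathCost (xs.getLastD p) ys := by
  induction xs generalizing p with
  | nil => simp [pathCost]
  | cons q xs ih =>
    simp only [List.cons_append, pathCost, ih, List.getLastD_cons, add_assoc]

theorem pathCost_replicate (c : α) (n : ℕ) : pathCost c (List.replicate n c) = 0 := by
  induction n with
  | zero => rfl
  | succ n ih => simp [List.replicate_succ, pathCost, ih]

theorem pathCost_le_anchoredCost (a p b : α) (l : List α) :
    pathCost p l ≤ anchoredCost a (p :: l) b := by
  simp only [anchoredCost]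
  nlinarith [sq_nonneg (dist a p), sq_nonneg (dist (l.getLastD p) b)]

theorem anchoredCost_replicate (a c b : α) (n : ℕ) :
    anchoredCost a (List.replicate (n + 1) c) b = 2 * dist a c ^ 2 + 2 * dist c b ^ 2 := by
  have hlast : (List.replicate n c).getLastD c = c := by
    induction n with
    | zero => rfl
    | succ n ih => rw [List.replicate_succ, List.getLastD_cons, ih]
  simp only [List.replicate_succ, anchoredCost, pathCost_replicate, hlast, add_zero]

theorem anchoredCost_append_le {xs ys : List α} (hxs : xs ≠ []) (hys : ys ≠ []) (a m b : α) :
    anchoredCost a (xs ++ ys) b ≤ anchoredCost a xs m + anchoredCost m ys b := by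
  obtain ⟨p, xs, rfl⟩ := List.exists_cons_of_ne_nil hxs
  obtain ⟨q, ys, rfl⟩ := List.exists_cons_of_ne_nil hys
  have := dist_sq_le_two_mul_add (xs.getLastD p) m q
  simp only [List.cons_append, anchoredCost, pathCost_append, pathCost,
    List.getLastD_append_cons]
  linarith

theorem anchoredCost_append_le_add {S : Set α} {D : ℝ}
    (hS : ∀ p ∈ S, ∀ q ∈ S, dist p q ^ 2 ≤ D) {a b : α} (ha : a ∈ S) (hb : b ∈ S)
    {xs ys : List α} (hl : ∀ p ∈ xs ++ ys, p ∈ S) (m : α) :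
    anchoredCost a (xs ++ ys) b ≤ anchoredCost a xs m + anchoredCost m ys b + 2 * D := by
  have hD : 0 ≤ D := le_trans (by simp) (hS a ha a ha)
  rcases xs with _ | ⟨p, xs⟩
  · rcases ys with _ | ⟨q, ys⟩
    · simpa using hD
    · have := hS a ha q (hl q (by simp))
      simp only [List.nil_append, anchoredCost]
      nlinarith [sq_nonneg (dist m q)]
  rcases ys with _ | ⟨q, ys⟩
  · have := hS _ (hl _ (by simpa only [List.append_nil] using List.getLastD_mem_cons)) b hb
    simp only [List.append_nil, anchoredCost]
    nlinarith [sq_nonneg (dist (xs.getLastD p) m)]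
  · linarith [anchoredCost_append_le (List.cons_ne_nil p xs) (List.cons_ne_nil q ys) a m b]

theorem anchoredCost_append₄_le {S : Set α} {D B : ℝ}
    (hS : ∀ p ∈ S, ∀ q ∈ S, dist p q ^ 2 ≤ D) (hDB : 6 * D ≤ B) {a m₁ m₂ m₃ b : α}
    (ha : a ∈ S) (hm₂ : m₂ ∈ S) (hm₃ : m₃ ∈ S) (hb : b ∈ S) {l₁ l₂ l₃ l₄ : List α}
    (hl : ∀ p ∈ l₁ ++ l₂ ++ l₃ ++ l₄, p ∈ S)
    (h₁ : anchoredCost a l₁ m₁ ≤ B) (h₂ : anchoredCost m₁ l₂ m₂ ≤ B)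
    (h₃ : anchoredCost m₂ l₃ m₃ ≤ B) (h₄ : anchoredCost m₃ l₄ b ≤ B) :
    anchoredCost a (l₁ ++ l₂ ++ l₃ ++ l₄) b ≤ 4 * B := by
  by_cases hne : l₁ ≠ [] ∧ l₂ ≠ [] ∧ l₃ ≠ [] ∧ l₄ ≠ []
  · obtain ⟨hne₁, hne₂, hne₃, hne₄⟩ := hne
    have g₃ := anchoredCost_append_le (xs := l₁ ++ l₂ ++ l₃) (by simp [hne₁]) hne₄ a m₃ b
    have g₂ := anchoredCost_append_le (xs := l₁ ++ l₂) (by simp [hne₁]) hne₃ a m₂ m₃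
    have g₁ := anchoredCost_append_le hne₁ hne₂ a m₁ m₂
    linarith
  · have g₃ := anchoredCost_append_le_add hS ha hb hl m₃
    have g₂ := anchoredCost_append_le_add hS ha hm₃
      (fun p hp => hl p (List.mem_append_left l₄ hp)) m₂
    have g₁ := anchoredCost_append_le_add hS ha hm₂
      (fun p hp => hl p (List.mem_append_left l₄ (List.mem_append_left l₃ hp))) m₁
    simp only [not_and_or, not_not] at hne
    rcases hne with rfl | rfl | rfl | rfl <;> simp only [anchoredCost_nil] at * <;> linarith

theorem sum_dist_castSucc_succ_eq_pathCost (m : ℕ) (y : Fin (m + 1) → α) :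
    ∑ i : Fin m, dist (y i.castSucc) (y i.succ) ^ 2
      = pathCost (y 0) (List.ofFn fun i => y i.succ) := by
  induction m with
  | zero => simp [pathCost]
  | succ m ih =>
    rw [Fin.sum_univ_succ, List.ofFn_succ, pathCost, ← ih fun i => y i.succ]
    simp only [Fin.castSucc_zero, Fin.succ_castSucc]

theorem sum_dist_finRotate_le_anchoredCost_add (m : ℕ) (y : Fin (m + 1) → α) (a b : α) :
    ∑ i, dist (y i) (y (finRotate (m + 1) i)) ^ 2
      ≤ anchoredCost a (List.ofFn y) b + dist (y (Fin.last m)) (y 0) ^ 2 := by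
  rw [Fin.sum_univ_castSucc, finRotate_last]
  simp only [finRotate_apply, Fin.coeSucc_eq_succ]
  rw [sum_dist_castSucc_succ_eq_pathCost, List.ofFn_succ]
  gcongr
  exact pathCost_le_anchoredCost a _ b _

end Cost

structure Square (E : Type*) [NormedAddCommGroup E] [InnerProductSpace ℝ E] where
  corner : E
  u : E
  v : E
  inner_eq_zero : ⟪u, v⟫ = 0
  norm_v : ‖v‖ = ‖u‖

namespace Square

variable {E : Type*} [NormedAddCommGroup E] [InnerProductSpace ℝ E] (Q : Square E)

def carrier : Set E :=
  {p | ∃ t ∈ Set.Icc (0 : ℝ) 1, ∃ r ∈ Set.Icc (0 : ℝ) 1, p = Q.corner + t • Q.u + r • Q.v}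

theorem corner_mem : Q.corner ∈ Q.carrier :=
  ⟨0, by norm_num, 0, by norm_num, by simp⟩

theorem corner_add_u_mem : Q.corner + Q.u ∈ Q.carrier :=
  ⟨1, by norm_num, 0, by norm_num, by simp⟩

theorem norm_smul_add_smul_sq (t r : ℝ) :
    ‖t • Q.u + r • Q.v‖ ^ 2 = (t ^ 2 + r ^ 2) * ‖Q.u‖ ^ 2 := by
  rw [norm_add_sq_real, norm_smul, norm_smul, inner_smul_left, inner_smul_right,
    Q.inner_eq_zero, Q.norm_v]
  simp only [Real.norm_eq_abs, mul_pow, sq_abs]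
  ring

theorem dist_sq_le {p q : E} (hp : p ∈ Q.carrier) (hq : q ∈ Q.carrier) :
    dist p q ^ 2 ≤ 2 * ‖Q.u‖ ^ 2 := by
  obtain ⟨t, ⟨ht₀, ht₁⟩, r, ⟨hr₀, hr₁⟩, rfl⟩ := hp
  obtain ⟨t', ⟨ht₀', ht₁'⟩, r', ⟨hr₀', hr₁'⟩, rfl⟩ := hq
  rw [dist_eq_norm, show Q.corner + t • Q.u + r • Q.v - (Q.corner + t' • Q.u + r' • Q.v)
    = (t - t') • Q.u + (r - r') • Q.v by module, norm_smul_add_smul_sq]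
  have : (t - t') ^ 2 + (r - r') ^ 2 ≤ 2 := by nlinarith
  nlinarith [sq_nonneg ‖Q.u‖]

/- The quadrants in the order of the first step of the Hilbert curve, each entered at `corner`
and left at `corner + u`. -/

noncomputable def quadrant₁ : Square E where
  corner := Q.corner
  u := (2⁻¹ : ℝ) • Q.v
  v := (2⁻¹ : ℝ) • Q.u
  inner_eq_zero := by
    rw [inner_smul_left, inner_smul_right, real_inner_comm, Q.inner_eq_zero, mul_zero, mul_zero]
  norm_v := by simp [norm_smul, Q.norm_v]

noncomputable def quadrant₂ : Square E where
  corner := Q.quadrant₁.corner + Q.quadrant₁.u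
  u := (2⁻¹ : ℝ) • Q.u
  v := (2⁻¹ : ℝ) • Q.v
  inner_eq_zero := by
    rw [inner_smul_left, inner_smul_right, Q.inner_eq_zero, mul_zero, mul_zero]
  norm_v := by simp [norm_smul, Q.norm_v]

noncomputable def quadrant₃ : Square E where
  corner := Q.quadrant₂.corner + Q.quadrant₂.u
  u := (2⁻¹ : ℝ) • Q.u
  v := (2⁻¹ : ℝ) • Q.v
  inner_eq_zero := Q.quadrant₂.inner_eq_zero
  norm_v := Q.quadrant₂.norm_v

noncomputable def quadrant₄ : Square E where
  corner := Q.quadrant₃.corner + Q.quadrant₃.u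
  u := -((2⁻¹ : ℝ) • Q.v)
  v := -((2⁻¹ : ℝ) • Q.u)
  inner_eq_zero := by rw [inner_neg_neg]; exact Q.quadrant₁.inner_eq_zero
  norm_v := by rw [norm_neg, norm_neg]; exact Q.quadrant₁.norm_v

theorem norm_quadrant₁_u : ‖Q.quadrant₁.u‖ = ‖Q.u‖ / 2 := by
  simp [quadrant₁, norm_smul, Q.norm_v, div_eq_inv_mul]

theorem norm_quadrant₂_u : ‖Q.quadrant₂.u‖ = ‖Q.u‖ / 2 := by
  simp [quadrant₂, norm_smul, div_eq_inv_mul]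

theorem norm_quadrant₃_u : ‖Q.quadrant₃.u‖ = ‖Q.u‖ / 2 := Q.norm_quadrant₂_u

theorem norm_quadrant₄_u : ‖Q.quadrant₄.u‖ = ‖Q.u‖ / 2 := by
  rw [quadrant₄, norm_neg]; exact Q.norm_quadrant₁_u

theorem quadrant₄_corner_add_u : Q.quadrant₄.corner + Q.quadrant₄.u = Q.corner + Q.u := by
  simp only [quadrant₄, quadrant₃, quadrant₂, quadrant₁]
  module

theorem quadrant₃_corner_mem : Q.quadrant₃.corner ∈ Q.carrier :=
  ⟨2⁻¹, by norm_num, 2⁻¹, by norm_num, by simp only [quadrant₃, quadrant₂, quadrant₁]; module⟩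

theorem quadrant₄_corner_mem : Q.quadrant₄.corner ∈ Q.carrier :=
  ⟨1, by norm_num, 2⁻¹, by norm_num, by
    simp only [quadrant₄, quadrant₃, quadrant₂, quadrant₁]; module⟩

theorem carrier_subset_quadrants : Q.carrier ⊆
    Q.quadrant₁.carrier ∪ Q.quadrant₂.carrier ∪ Q.quadrant₃.carrier ∪ Q.quadrant₄.carrier := by
  rintro p ⟨t, ⟨ht₀, ht₁⟩, r, ⟨hr₀, hr₁⟩, rfl⟩
  simp only [Set.mem_union, carrier, quadrant₄, quadrant₃, quadrant₂, quadrant₁, Set.mem_Icc,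
    Set.mem_ofPred_eq]
  rcases le_or_gt t 2⁻¹ with ht | ht <;> rcases le_or_gt r 2⁻¹ with hr | hr
  · refine .inl <| .inl <| .inl ⟨2 * r, ?_, 2 * t, ?_, by module⟩ <;> constructor <;> linarith
  · refine .inl <| .inl <| .inr ⟨2 * t, ?_, 2 * r - 1, ?_, by module⟩ <;> constructor <;> linarith
  · refine .inr ⟨1 - 2 * r, ?_, 2 - 2 * t, ?_, by module⟩ <;> constructor <;> linarith
  · refine .inl <| .inr ⟨2 * t - 1, ?_, 2 * r - 1, ?_, by module⟩ <;> constructor <;> linarith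

/-- By `hsep`, no quadrant `k` levels down contains two distinct points of `l`. -/
theorem exists_perm_anchoredCost_le_of_sep (k : ℕ) {l : List E} (hl : ∀ p ∈ l, p ∈ Q.carrier)
    (hsep : ∀ p ∈ l, ∀ q ∈ l, p ≠ q → 2 * ‖Q.u‖ ≤ 2 ^ k * dist p q) :
    ∃ l' : List E, l'.Perm l ∧ anchoredCost Q.corner l' (Q.corner + Q.u) ≤ 48 * ‖Q.u‖ ^ 2 := by
  induction k generalizing Q l with
  | zero =>
    refine ⟨l, .refl l, ?_⟩
    rcases l with _ | ⟨c, t⟩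
    · simp only [anchoredCost_nil]; positivity
    have hc : ∀ p ∈ c :: t, p = c := fun p hp => by
      by_contra hne
      have h₁ := hsep p hp c (by simp) hne
      have h₂ := Q.dist_sq_le (hl p hp) (hl c (by simp))
      rw [pow_zero, one_mul] at h₁
      exact hne (dist_eq_zero.1 (by nlinarith [norm_nonneg Q.u]))
    have hrep : c :: t = List.replicate (t.length + 1) c := List.eq_replicate_iff.2 ⟨rfl, hc⟩
    rw [hrep, anchoredCost_replicate]
    nlinarith [Q.dist_sq_le Q.corner_mem (hl c (by simp)),
      Q.dist_sq_le (hl c (by simp)) Q.corner_add_u_mem]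
  | succ k ih =>
    obtain ⟨l₁, l₂, l₃, l₄, hperm, h₁, h₂, h₃, h₄⟩ :=
      List.exists_perm_append₄ fun p hp => Q.carrier_subset_quadrants (hl p hp)
    have hsub : ∀ p ∈ l₁ ++ l₂ ++ l₃ ++ l₄, p ∈ l := fun p hp => hperm.mem_iff.2 hp
    have hsep' : ∀ p ∈ l₁ ++ l₂ ++ l₃ ++ l₄, ∀ q ∈ l₁ ++ l₂ ++ l₃ ++ l₄, p ≠ q →
        2 * (‖Q.u‖ / 2) ≤ 2 ^ k * dist p q := fun p hp q hq hne => by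
      have := hsep p (hsub p hp) q (hsub q hq) hne
      rw [pow_succ] at this
      linarith
    obtain ⟨l₁', hp₁, hc₁⟩ := ih Q.quadrant₁ h₁ fun p hp q hq =>
      Q.norm_quadrant₁_u ▸ hsep' p (by simp [hp]) q (by simp [hq])
    obtain ⟨l₂', hp₂, hc₂⟩ := ih Q.quadrant₂ h₂ fun p hp q hq =>
      Q.norm_quadrant₂_u ▸ hsep' p (by simp [hp]) q (by simp [hq])
    obtain ⟨l₃', hp₃, hc₃⟩ := ih Q.quadrant₃ h₃ fun p hp q hq =>
      Q.norm_quadrant₃_u ▸ hsep' p (by simp [hp]) q (by simp [hq])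
    obtain ⟨l₄', hp₄, hc₄⟩ := ih Q.quadrant₄ h₄ fun p hp q hq =>
      Q.norm_quadrant₄_u ▸ hsep' p (by simp [hp]) q (by simp [hq])
    have hperm' := ((hp₁.append hp₂).append hp₃).append hp₄
    refine ⟨l₁' ++ l₂' ++ l₃' ++ l₄', hperm'.trans hperm.symm, ?_⟩
    rw [Q.norm_quadrant₁_u] at hc₁
    rw [Q.norm_quadrant₂_u] at hc₂
    rw [Q.norm_quadrant₃_u] at hc₃
    rw [Q.norm_quadrant₄_u, Q.quadrant₄_corner_add_u] at hc₄
    have := anchoredCost_append₄_le (fun p hp q hq => Q.dist_sq_le hp hq)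
      (le_of_eq (by ring)) Q.corner_mem Q.quadrant₃_corner_mem Q.quadrant₄_corner_mem
      Q.corner_add_u_mem (fun p hp => hl p (hsub p (hperm'.mem_iff.1 hp))) hc₁ hc₂ hc₃ hc₄
    linarith

theorem exists_perm_anchoredCost_le {l : List E} (hl : ∀ p ∈ l, p ∈ Q.carrier) :
    ∃ l' : List E, l'.Perm l ∧ anchoredCost Q.corner l' (Q.corner + Q.u) ≤ 48 * ‖Q.u‖ ^ 2 :=
  let ⟨k, hk⟩ := l.exists_le_two_pow_mul_dist (2 * ‖Q.u‖)
  Q.exists_perm_anchoredCost_le_of_sep k hl hk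

theorem exists_perm_sum_dist_finRotate_le {n : ℕ} (x : Fin n → E) (hx : ∀ i, x i ∈ Q.carrier) :
    ∃ σ : Equiv.Perm (Fin n),
      ∑ i, dist (x (σ i)) (x (σ (finRotate n i))) ^ 2 ≤ 50 * ‖Q.u‖ ^ 2 := by
  rcases n with _ | m
  · exact ⟨1, by simp only [Finset.univ_eq_empty, Finset.sum_empty]; positivity⟩
  obtain ⟨l, hperm, hcost⟩ := Q.exists_perm_anchoredCost_le (l := List.ofFn x)
    fun p hp => by obtain ⟨i, rfl⟩ := List.mem_ofFn.1 hp; exact hx i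
  obtain ⟨σ, rfl⟩ := hperm.exists_eq_ofFn_comp
  refine ⟨σ, ?_⟩
  have := sum_dist_finRotate_le_anchoredCost_add m (x ∘ σ) Q.corner (Q.corner + Q.u)
  have := Q.dist_sq_le (hx (σ (Fin.last m))) (hx (σ 0))
  simp only [Function.comp] at *
  linarith

end Square

theorem exists_square_superset_of_isBounded {Ω : Set (EuclideanSpace ℝ (Fin 2))}
    (hΩ : Bornology.IsBounded Ω) :
    ∃ Q : Square (EuclideanSpace ℝ (Fin 2)), 0 < ‖Q.u‖ ∧ Ω ⊆ Q.carrier := by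
  obtain ⟨r, hr, hΩr⟩ := hΩ.subset_closedBall_lt 0 0
  let Q : Square (EuclideanSpace ℝ (Fin 2)) :=
    ⟨!₂[-r, -r], !₂[2 * r, 0], !₂[0, 2 * r], by simp [PiLp.inner_apply],
      by simp [EuclideanSpace.norm_eq]⟩
  refine ⟨Q, ?_, hΩr.trans fun p hp => ?_⟩
  · simp only [Q, EuclideanSpace.norm_eq, Real.norm_eq_abs, sq_abs, Fin.sum_univ_two,
      Matrix.cons_val_zero, Matrix.cons_val_one, Matrix.cons_val_fin_one, ne_eq,
      OfNat.ofNat_ne_zero, not_false_eq_true, zero_pow, add_zero, Real.sqrt_pos]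
    positivity
  have hcoord (i : Fin 2) : |p i| ≤ r :=
    (PiLp.norm_apply_le p i).trans (by simpa using mem_closedBall_zero_iff.1 hp)
  obtain ⟨h₀, h₀'⟩ := abs_le.1 (hcoord 0)
  obtain ⟨h₁, h₁'⟩ := abs_le.1 (hcoord 1)
  refine ⟨(p 0 + r) / (2 * r), ⟨div_nonneg (by linarith) (by linarith), ?_⟩,
    (p 1 + r) / (2 * r), ⟨div_nonneg (by linarith) (by linarith), ?_⟩, ?_⟩
  · rw [div_le_one (by positivity)]; linarith
  · rw [div_le_one (by positivity)]; linarith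
  · ext i
    fin_cases i <;>
      simp only [Q, Fin.zero_eta, Fin.mk_one, PiLp.add_apply, PiLp.smul_apply, smul_eq_mul,
        Matrix.cons_val_zero, Matrix.cons_val_one, Matrix.cons_val_fin_one, mul_zero,
        add_zero] <;>
      field_simp <;> ring

end QuadraticTSP

/-- Space-filling curve bound: the quadratic travelling salesperson cost of any finite
family of points in a bounded planar set is bounded by a constant depending only on the
set. -/
theorem quadratic_TSP_uniform_bound
    (Ω : Set (EuclideanSpace ℝ (Fin 2))) (hΩbdd : Bornology.IsBounded Ω) :
    ∃ C > (0:ℝ), ∀ n : ℕ, 1 ≤ n → ∀ x : Fin n → EuclideanSpace ℝ (Fin 2),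
      (∀ i, x i ∈ Ω) →
      (⨅ τ : Equiv.Perm (Fin n),
        ∑ i : Fin n, dist (x (τ i)) (x (τ (finRotate n i))) ^ 2) ≤ C := by
  obtain ⟨Q, hQ, hΩQ⟩ := QuadraticTSP.exists_square_superset_of_isBounded hΩbdd
  refine ⟨50 * ‖Q.u‖ ^ 2, by positivity, fun n _ x hx => ?_⟩
  obtain ⟨σ, hσ⟩ := Q.exists_perm_sum_dist_finRotate_le x fun i => hΩQ (hx i)
  have hnonneg : ∀ τ : Equiv.Perm (Fin n),
      0 ≤ ∑ i : Fin n, dist (x (τ i)) (x (τ (finRotate n i))) ^ 2 :=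
    fun τ => Finset.sum_nonneg fun i _ => sq_nonneg _
  exact ciInf_le_of_le ⟨0, by rintro _ ⟨τ, rfl⟩; exact hnonneg τ⟩ σ hσ
end
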